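/- arXiv:2508.15143 — 5 statements merged into one kernel-verified Lean document; each statement's English description precedes it below -/
import Mathlib

section
/- The measure μ₄ is invariant under the logistic map f₄: the pushforward of μ₄ under f₄ equals μ₄, i.e. (f₄)_* μ₄ = μ₄, where f₄(x) = 4x(1−x) and μ₄ is the measure on ℝ with density ρ₄(x) = (1/π)·(x(1−x))^(−1/2) on (0,1). -/
open MeasureTheory Real

/-- The logistic map `f₄`. -/
noncomputable def f4 (x : ℝ) : ℝ := 4 * x * (1 - x)

/-- Invariant density of the ergodic logistic map `f₄`. -/
noncomputable def rho4 (x : ℝ) : ℝ := (1 / Real.pi) * (x * (1 - x)) ^ (-(1:ℝ)/2)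

/-- The measure on `ℝ` given by Lebesgue measure restricted to `(0,1)` with density `rho4`. -/
noncomputable def mu4 : Measure ℝ :=
  (volume.restrict (Set.Ioo (0:ℝ) 1)).withDensity fun x => ENNReal.ofReal (rho4 x)

/-!
The substitution `y = sin² (π t / 2)` pushes Lebesgue measure on `(0,1)` forward to `μ₄`, because
its inverse `(2/π) arcsin √y` is a primitive of `ρ₄`. By the double-angle formula the same
substitution conjugates the tent map to `f₄`, and the tent map preserves Lebesgue measure on
`(0,1)`: each of its two linear branches covers `(0,1)` with slope `±2`.
-/

open Set Function

theorem MeasureTheory.Measure.map_map_eq_map_of_semiconj {α β : Type*} [MeasurableSpace α]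
    [MeasurableSpace β] {ν : Measure α} {h : α → β} {g : α → α} {f : β → β}
    (hh : Measurable h) (hg : Measurable g) (hf : Measurable f) (hfg : Semiconj h g f)
    (hν : Measure.map g ν = ν) : Measure.map f (Measure.map h ν) = Measure.map h ν := by
  rw [Measure.map_map hf hh, ← hfg.comp_eq, ← Measure.map_map hh hg, hν]

theorem map_withDensity_abs_deriv_eq_volume {s : Set ℝ} (hs : MeasurableSet s) {g g' : ℝ → ℝ}
    (hg' : ∀ x ∈ s, HasDerivWithinAt g (g' x) s x) (hg : InjOn g s) :
    Measure.map g ((volume.restrict s).withDensity fun x => ENNReal.ofReal |g' x|) =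
      volume.restrict (g '' s) := by
  simpa using map_withDensity_abs_det_fderiv_eq_addHaar volume hs.nullMeasurableSet
    (fun x hx => (hg' x hx).hasFDerivWithinAt) hg

theorem Real.volume_preimage_const_sub_mul {a : ℝ} (ha : a ≠ 0) (b : ℝ) (s : Set ℝ) :
    volume ((fun x => b - a * x) ⁻¹' s) = ENNReal.ofReal |a⁻¹| * volume s := by
  have : (fun x => b - a * x) ⁻¹' s = (fun x => -a * x) ⁻¹' ((b + ·) ⁻¹' s) := by
    ext x; simp [sub_eq_add_neg]
  rw [this, Real.volume_preimage_mul_left (neg_ne_zero.2 ha), measure_preimage_add, inv_neg,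
    abs_neg]

noncomputable def tent (x : ℝ) : ℝ := if x ≤ 1 / 2 then 2 * x else 2 - 2 * x

noncomputable def tentConj (t : ℝ) : ℝ := sin (π / 2 * t) ^ 2

noncomputable def tentConjInv (y : ℝ) : ℝ := arcsin (√y) / (π / 2)

lemma measurable_f4 : Measurable f4 := by
  unfold f4; fun_prop

lemma measurable_tent : Measurable tent :=
  Measurable.ite measurableSet_Iic (by fun_prop) (by fun_prop)

lemma measurable_tentConj : Measurable tentConj := by
  unfold tentConj; fun_prop

lemma measurable_tentConjInv : Measurable tentConjInv := by
  unfold tentConjInv; fun_prop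

lemma mapsTo_tentConj : MapsTo tentConj (Ioo 0 1) (Ioo 0 1) := by
  rintro t ⟨ht0, ht1⟩
  have hpi := pi_pos
  have hs0 : 0 < sin (π / 2 * t) := sin_pos_of_pos_of_lt_pi (by positivity) (by nlinarith)
  have hs1 : sin (π / 2 * t) < 1 := by
    rw [← sin_pi_div_two]
    exact strictMonoOn_sin ⟨by nlinarith, by nlinarith⟩ ⟨by linarith, le_rfl⟩ (by nlinarith)
  exact ⟨by unfold tentConj; positivity, pow_lt_one₀ hs0.le hs1 two_ne_zero⟩

lemma mapsTo_tentConjInv : MapsTo tentConjInv (Ioo 0 1) (Ioo 0 1) := by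
  rintro y ⟨hy0, hy1⟩
  have ha0 : 0 < arcsin √y := arcsin_pos.2 (sqrt_pos.2 hy0)
  have ha1 : arcsin √y < π / 2 :=
    arcsin_lt_pi_div_two.2 ((sqrt_lt' one_pos).2 (by rwa [one_pow]))
  exact ⟨div_pos ha0 (by positivity), (div_lt_one (by positivity)).2 ha1⟩

lemma leftInvOn_tentConjInv_tentConj : LeftInvOn tentConjInv tentConj (Ioo 0 1) := by
  rintro t ⟨ht0, ht1⟩
  have hpi := pi_pos
  unfold tentConj tentConjInv
  rw [sqrt_sq (sin_nonneg_of_nonneg_of_le_pi (by positivity) (by nlinarith)),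
    arcsin_sin (by nlinarith) (by nlinarith)]
  field_simp

lemma rightInvOn_tentConjInv_tentConj : RightInvOn tentConjInv tentConj (Ioo 0 1) := by
  rintro y ⟨hy0, hy1⟩
  unfold tentConj tentConjInv
  rw [mul_div_cancel₀ _ (by positivity), sin_arcsin (by linarith [sqrt_nonneg y])
    (sqrt_le_one.2 hy1.le), sq_sqrt hy0.le]

lemma bijOn_tentConjInv : BijOn tentConjInv (Ioo 0 1) (Ioo 0 1) :=
  InvOn.bijOn ⟨rightInvOn_tentConjInv_tentConj, leftInvOn_tentConjInv_tentConj⟩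
    mapsTo_tentConjInv mapsTo_tentConj

lemma hasDerivAt_tentConjInv {y : ℝ} (hy : y ∈ Ioo 0 1) :
    HasDerivAt tentConjInv (rho4 y) y := by
  obtain ⟨hy0, hy1⟩ := hy
  have h1y : √(1 - y) ≠ 0 := (sqrt_pos.2 (sub_pos.2 hy1)).ne'
  have hd := ((hasDerivAt_arcsin (by linarith [sqrt_nonneg y])
    ((sqrt_lt' one_pos).2 (by rwa [one_pow])).ne).comp y (hasDerivAt_sqrt hy0.ne')).div_const
    (π / 2)
  refine hd.congr_deriv ?_
  rw [sq_sqrt hy0.le, rho4, show -(1:ℝ)/2 = -(1/2) by norm_num,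
    rpow_neg (by nlinarith), ← sqrt_eq_rpow, sqrt_mul hy0.le]
  field_simp

lemma rho4_nonneg {x : ℝ} (hx : x ∈ Ioo 0 1) : 0 ≤ rho4 x :=
  mul_nonneg (by positivity) (rpow_nonneg (mul_nonneg hx.1.le (sub_nonneg.2 hx.2.le)) _)

lemma mu4_eq_map_tentConj : mu4 = Measure.map tentConj (volume.restrict (Ioo 0 1)) := by
  have hmap : Measure.map tentConjInv mu4 = volume.restrict (Ioo 0 1) := by
    rw [← bijOn_tentConjInv.image_eq, ← map_withDensity_abs_deriv_eq_volume measurableSet_Ioo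
      (fun y hy => (hasDerivAt_tentConjInv hy).hasDerivWithinAt) bijOn_tentConjInv.injOn]
    refine congrArg _ <| withDensity_congr_ae <|
      (ae_restrict_mem measurableSet_Ioo).mono fun x hx => ?_
    simp only [abs_of_nonneg (rho4_nonneg hx)]
  have hae : tentConj ∘ tentConjInv =ᵐ[mu4] id :=
    (withDensity_absolutelyContinuous _ _).ae_le <|
      (ae_restrict_mem measurableSet_Ioo).mono fun y hy => rightInvOn_tentConjInv_tentConj hy
  rw [← hmap, Measure.map_map measurable_tentConj measurable_tentConjInv, Measure.map_congr hae,
    Measure.map_id]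

lemma semiconj_tentConj_tent_f4 : Semiconj tentConj tent f4 := by
  intro t
  have hf4 : f4 (tentConj t) = sin (π * t) ^ 2 := by
    rw [f4, tentConj, show π * t = 2 * (π / 2 * t) by ring, sin_two_mul, ← cos_sq']
    ring
  rw [hf4, tentConj, tent]
  split_ifs
  · ring_nf
  · rw [show π / 2 * (2 - 2 * t) = π - π * t by ring, sin_pi_sub]

lemma tent_preimage_inter_Ioo (s : Set ℝ) :
    tent ⁻¹' s ∩ Ioo 0 1 = (2 * ·) ⁻¹' (s ∩ Ioc 0 1) ∪ (2 - 2 * ·) ⁻¹' (s ∩ Ioo 0 1) := by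
  ext x
  simp only [mem_inter_iff, mem_preimage, mem_union, mem_Ioo, mem_Ioc, tent]
  split_ifs with hx <;> grind

lemma map_tent_volume_Ioo :
    Measure.map tent (volume.restrict (Ioo 0 1)) = volume.restrict (Ioo 0 1) := by
  ext s hs
  have hIoc : volume (s ∩ Ioc 0 1) = volume (s ∩ Ioo 0 1) :=
    measure_congr (ae_eq_refl s |>.inter Ioo_ae_eq_Ioc.symm)
  have hdisj : Disjoint ((2 * ·) ⁻¹' (s ∩ Ioc 0 1)) ((2 - 2 * ·) ⁻¹' (s ∩ Ioo (0 : ℝ) 1)) :=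
    disjoint_left.2 fun x h₁ h₂ => by linarith [h₁.2.2, h₂.2.2]
  rw [Measure.map_apply measurable_tent hs, Measure.restrict_apply (measurable_tent hs),
    Measure.restrict_apply hs, tent_preimage_inter_Ioo,
    measure_union hdisj ((measurable_const.sub (measurable_const_mul 2)) (hs.inter
      measurableSet_Ioo)),
    Real.volume_preimage_mul_left two_ne_zero, Real.volume_preimage_const_sub_mul two_ne_zero,
    hIoc, ← add_mul, ← ENNReal.ofReal_add (abs_nonneg _) (abs_nonneg _)]
  norm_num

theorem mu4_invariant_under_f4 : Measure.map f4 mu4 = mu4 := by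
  rw [mu4_eq_map_tentConj]
  exact Measure.map_map_eq_map_of_semiconj measurable_tentConj measurable_tent measurable_f4
    semiconj_tentConj_tent_f4 map_tent_volume_Ioo
end

section
/- The logistic map f₄(x) = 4x(1−x) is ergodic with respect to the probability measure μ₄ on ℝ with density ρ₄(x) = (1/π)·(x(1−x))^(−1/2) on (0,1): f₄ is μ₄-measure-preserving and every Borel set A with f₄⁻¹(A) = A (up to μ₄-null sets) has μ₄(A) = 0 or μ₄(A) = 1. -/
/-!
The map `h(θ) = sin²(πθ)` from the unit circle `ℝ/ℤ` to `[0, 1]` satisfies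
`f₄ ∘ h = h ∘ (θ ↦ 2θ)`, by the double-angle formula. It pushes Haar measure forward
to `μ₄`: `h` is two-to-one (symmetric under `θ ↦ 1 - θ`), and on `(0, 1/2)` the change
of variables formula applies with `|h'(θ)| · ρ₄(h θ) = 2`. Hence `f₄` on `(ℝ, μ₄)` is
a factor of the doubling map on the circle, which is ergodic, and ergodicity passes
to factors.
-/

open MeasureTheory Real

open Set Function
open scoped ENNReal

theorem withDensity_restrict_image_eq_smul_map {s : Set ℝ} {f f' : ℝ → ℝ} {g : ℝ → ℝ≥0∞}
    {c : ℝ≥0∞} (hs : MeasurableSet s) (hf : Measurable f)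
    (hf' : ∀ x ∈ s, HasDerivWithinAt f (f' x) s x) (hinj : InjOn f s)
    (hg : ∀ x ∈ s, ENNReal.ofReal |f' x| * g (f x) = c) :
    (volume.restrict (f '' s)).withDensity g = c • (volume.restrict s).map f := by
  ext A hA
  have hsA : MeasurableSet (s ∩ f ⁻¹' A) := hs.inter (hf hA)
  rw [withDensity_apply', Measure.restrict_restrict hA, inter_comm, ← image_inter_preimage,
    lintegral_image_eq_lintegral_abs_deriv_mul hsA
      (fun x hx => (hf' x hx.1).mono inter_subset_left) (hinj.mono inter_subset_left),
    setLIntegral_congr_fun hsA (fun x hx => hg x hx.1), setLIntegral_const, Measure.smul_apply,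
    Measure.map_apply hf hA, Measure.restrict_apply (hf hA), inter_comm, smul_eq_mul, mul_comm]

theorem map_restrict_Ioc_zero_one_eq_two_smul {X : Type*} [MeasurableSpace X] {g : ℝ → X}
    (hg : Measurable g) (hsymm : ∀ θ, g (1 - θ) = g θ) :
    (volume.restrict (Ioc 0 1)).map g = (2 : ℝ≥0∞) • (volume.restrict (Ioo 0 (1 / 2))).map g := by
  have hsplit : volume.restrict (Ioc (0 : ℝ) 1) =
      volume.restrict (Ioo 0 (1 / 2)) + volume.restrict (Ioo (1 / 2) 1) := by
    rw [← Ioc_union_Ioc_eq_Ioc (by norm_num : (0 : ℝ) ≤ 1 / 2) (by norm_num),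
      Measure.restrict_union (Ioc_disjoint_Ioc_of_le le_rfl) measurableSet_Ioc,
      ← Measure.restrict_congr_set Ioo_ae_eq_Ioc, ← Measure.restrict_congr_set Ioo_ae_eq_Ioc]
  have hreflect : (volume.restrict (Ioo (1 / 2 : ℝ) 1)).map (fun θ => 1 - θ) =
      volume.restrict (Ioo 0 (1 / 2)) := by
    have := (Measure.measurePreserving_sub_left volume (1 : ℝ)).restrict_preimage
      (measurableSet_Ioo (a := 0) (b := 1 / 2))
    rw [preimage_const_sub_Ioo] at this
    norm_num at this
    exact this.map_eq
  rw [hsplit, Measure.map_add _ _ hg, ← hreflect, Measure.map_map hg (measurable_const_sub 1),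
    show g ∘ (fun θ => 1 - θ) = g from funext hsymm, two_smul]

theorem QuasiErgodic.prob_eq_zero_or_one₀ {α : Type*} [MeasurableSpace α] {f : α → α}
    {μ : Measure α} [IsProbabilityMeasure μ] {s : Set α} (hf : QuasiErgodic f μ)
    (hs : NullMeasurableSet s μ) (hfs : μ (symmDiff (f ⁻¹' s) s) = 0) :
    μ s = 0 ∨ μ s = 1 := by
  rcases hf.ae_empty_or_univ₀ hs (measure_symmDiff_eq_zero_iff.mp hfs) with h | h
  · exact .inl (by rw [measure_congr h, measure_empty])
  · exact .inr (by rw [measure_congr h, measure_univ])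

noncomputable def sinSqPi (θ : ℝ) : ℝ := sin (π * θ) ^ 2

lemma continuous_sinSqPi : Continuous sinSqPi := by
  unfold sinSqPi; fun_prop

lemma sinSqPi_periodic : Periodic sinSqPi 1 := fun θ => by
  simp [sinSqPi, mul_add, sin_add_pi]

lemma sinSqPi_one_sub (θ : ℝ) : sinSqPi (1 - θ) = sinSqPi θ := by
  simp [sinSqPi, mul_sub, sin_pi_sub]

lemma sinSqPi_mul_one_sub (θ : ℝ) :
    sinSqPi θ * (1 - sinSqPi θ) = (sin (2 * π * θ) / 2) ^ 2 := by
  rw [sinSqPi, ← cos_sq', mul_assoc, sin_two_mul]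
  ring

lemma f4_sinSqPi (θ : ℝ) : f4 (sinSqPi θ) = sinSqPi (2 * θ) := by
  rw [f4, mul_assoc, sinSqPi_mul_one_sub, sinSqPi, mul_left_comm, ← mul_assoc]
  ring

lemma hasDerivAt_sinSqPi (θ : ℝ) : HasDerivAt sinSqPi (π * sin (2 * π * θ)) θ := by
  refine (((hasDerivAt_id θ).const_mul π).sin.pow 2).congr_deriv ?_
  simp only [id, mul_one, mul_assoc, sin_two_mul]
  ring

lemma strictMonoOn_sinSqPi : StrictMonoOn sinSqPi (Icc 0 (1 / 2)) := by
  intro a ha b hb hab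
  have hπ := pi_pos
  have hmem : ∀ x ∈ Icc (0 : ℝ) (1 / 2), π * x ∈ Icc (-(π / 2)) (π / 2) := fun x hx =>
    ⟨by nlinarith [hx.1], by nlinarith [hx.2]⟩
  have hsin : sin (π * a) < sin (π * b) :=
    strictMonoOn_sin (hmem a ha) (hmem b hb) (by nlinarith)
  have ha0 : 0 ≤ sin (π * a) :=
    sin_nonneg_of_nonneg_of_le_pi (by nlinarith [ha.1]) (by nlinarith [ha.2])
  unfold sinSqPi
  gcongr

lemma sinSqPi_image_Ioo : sinSqPi '' Ioo 0 (1 / 2) = Ioo 0 1 := by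
  have h0 : sinSqPi 0 = 0 := by simp [sinSqPi]
  have h1 : sinSqPi (1 / 2) = 1 := by rw [sinSqPi, mul_one_div, sin_pi_div_two, one_pow]
  refine (strictMonoOn_sinSqPi.image_Ioo_subset.trans_eq (by rw [h0, h1])).antisymm ?_
  have := intermediate_value_Ioo (by norm_num : (0 : ℝ) ≤ 1 / 2) continuous_sinSqPi.continuousOn
  rwa [h0, h1] at this

lemma abs_deriv_mul_rho4_sinSqPi {θ : ℝ} (hθ : θ ∈ Ioo 0 (1 / 2)) :
    |π * sin (2 * π * θ)| * rho4 (sinSqPi θ) = 2 := by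
  have hπ := pi_pos
  have hsin : 0 < sin (2 * π * θ) :=
    sin_pos_of_pos_of_lt_pi (by nlinarith [hθ.1]) (by nlinarith [hθ.2])
  rw [rho4, sinSqPi_mul_one_sub, neg_div, rpow_neg (sq_nonneg _), ← sqrt_eq_rpow,
    sqrt_sq (by positivity), abs_of_pos (by positivity)]
  generalize sin (2 * π * θ) = s at hsin ⊢
  field_simp

lemma mu4_eq_two_smul_map_sinSqPi :
    mu4 = (2 : ℝ≥0∞) • (volume.restrict (Ioo 0 (1 / 2))).map sinSqPi := by
  rw [mu4, ← sinSqPi_image_Ioo]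
  refine withDensity_restrict_image_eq_smul_map measurableSet_Ioo continuous_sinSqPi.measurable
    (fun θ _ => (hasDerivAt_sinSqPi θ).hasDerivWithinAt)
    (strictMonoOn_sinSqPi.injOn.mono Ioo_subset_Icc_self) (fun θ hθ => ?_)
  rw [← ENNReal.ofReal_mul (abs_nonneg _), abs_deriv_mul_rho4_sinSqPi hθ, ENNReal.ofReal_ofNat]

noncomputable def sinSqPiCircle : UnitAddCircle → ℝ := sinSqPi_periodic.lift

lemma sinSqPiCircle_coe (θ : ℝ) : sinSqPiCircle θ = sinSqPi θ :=
  sinSqPi_periodic.lift_coe θ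

lemma continuous_sinSqPiCircle : Continuous sinSqPiCircle := by
  rw [QuotientAddGroup.isOpenQuotientMap_mk.isQuotientMap.continuous_iff]
  exact continuous_sinSqPi

lemma measurePreserving_sinSqPiCircle : MeasurePreserving sinSqPiCircle volume mu4 := by
  refine ⟨continuous_sinSqPiCircle.measurable, ?_⟩
  have hmk := UnitAddCircle.measurePreserving_mk 0
  rw [zero_add] at hmk
  rw [← hmk.map_eq, Measure.map_map continuous_sinSqPiCircle.measurable hmk.measurable,
    show sinSqPiCircle ∘ (↑) = sinSqPi from funext sinSqPiCircle_coe,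
    map_restrict_Ioc_zero_one_eq_two_smul continuous_sinSqPi.measurable sinSqPi_one_sub,
    mu4_eq_two_smul_map_sinSqPi]

lemma semiconj_sinSqPiCircle :
    Semiconj sinSqPiCircle (fun y : UnitAddCircle => (2 : ℕ) • y) f4 := by
  intro y
  induction y using QuotientAddGroup.induction_on with
  | H θ =>
    show sinSqPiCircle ((2 : ℕ) • (θ : UnitAddCircle)) = _
    rw [← AddCircle.coe_nsmul, sinSqPiCircle_coe, sinSqPiCircle_coe, f4_sinSqPi, nsmul_eq_mul,
      Nat.cast_ofNat]

theorem ergodic_f4 : Ergodic f4 mu4 :=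
  measurePreserving_sinSqPiCircle.ergodic_of_ergodic_semiconj (AddCircle.ergodic_nsmul one_lt_two)
    (by unfold f4; fun_prop) semiconj_sinSqPiCircle

instance isProbabilityMeasure_mu4 : IsProbabilityMeasure mu4 := by
  have := measurePreserving_sinSqPiCircle.measure_preimage (s := univ) .univ
  rw [preimage_univ, UnitAddCircle.measure_univ] at this
  exact ⟨this.symm⟩

theorem f4_ergodic_wrt_mu4 :
    MeasurePreserving f4 mu4 mu4 ∧
    ∀ A : Set ℝ, MeasurableSet A → mu4 (symmDiff (f4 ⁻¹' A) A) = 0 →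
      mu4 A = 0 ∨ mu4 A = 1 :=
  ⟨ergodic_f4.toMeasurePreserving, fun _ hA hinv =>
    ergodic_f4.quasiErgodic.prob_eq_zero_or_one₀ hA.nullMeasurableSet hinv⟩
end

section
/- Euler integral representation of the Kummer (confluent hypergeometric) function: for real parameters c > a > 0 and every real ξ, (Γ(c)/(Γ(a)Γ(c−a))) · ∫₀¹ x^{a−1}(1−x)^{c−a−1} e^{ξx} dx = Σ_{r=0}^∞ ((a)_r/((c)_r · r!)) ξ^r, where the series converges for all ξ. -/
/-!
Expand `exp (ξ x)` in its power series and integrate term by term against the Beta weight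
`x ^ (a - 1) (1 - x) ^ (c - a - 1)` on `[0, 1]`; the interchange is justified by dominated
convergence, since `|x| ≤ 1` there and the exponential series of `|ξ|` converges. The `r`-th
moment of the weight is `B(a + r, c - a)`, and `B(a + r, c - a) / B(a, c - a) = (a)_r / (c)_r`
by the functional equation of `Γ`.
-/

open MeasureTheory Real ProbabilityTheory

theorem Real.Gamma_add_nat_eq_ascPochhammer_eval_mul {x : ℝ} (hx : ∀ m : ℕ, x ≠ -m) (n : ℕ) :
    Gamma (x + n) = (ascPochhammer ℝ n).eval x * Gamma x := by
  induction n with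
  | zero => simp
  | succ n ih =>
    have hxn : x + n ≠ 0 := fun h => hx n (eq_neg_of_add_eq_zero_left h)
    rw [Nat.cast_succ, ← add_assoc, Gamma_add_one hxn, ih, ascPochhammer_succ_eval]
    ring

namespace ProbabilityTheory

theorem beta_add_nat {p q : ℝ} (hp : 0 < p) (hq : 0 < q) (n : ℕ) :
    beta (p + n) q = (ascPochhammer ℝ n).eval p / (ascPochhammer ℝ n).eval (p + q) * beta p q := by
  have not_neg_nat {x : ℝ} (hx : 0 < x) (m : ℕ) : x ≠ -m := by
    have : (0 : ℝ) ≤ m := m.cast_nonneg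
    linarith
  have hpq : 0 < p + q := add_pos hp hq
  rw [beta, beta, add_right_comm, Gamma_add_nat_eq_ascPochhammer_eval_mul (not_neg_nat hp),
    Gamma_add_nat_eq_ascPochhammer_eval_mul (not_neg_nat hpq)]
  have := (ascPochhammer_pos n (p + q) hpq).ne'
  have := (Gamma_pos_of_pos hpq).ne'
  field_simp

end ProbabilityTheory

lemma Complex.ofReal_rpow_mul_one_sub_rpow {p q x : ℝ} (hx : x ∈ Set.Icc (0 : ℝ) 1) :
    ((x ^ (p - 1) * (1 - x) ^ (q - 1) : ℝ) : ℂ)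
      = (x : ℂ) ^ ((p : ℂ) - 1) * (1 - (x : ℂ)) ^ ((q : ℂ) - 1) := by
  rw [Complex.ofReal_mul, Complex.ofReal_cpow hx.1, Complex.ofReal_cpow (sub_nonneg.2 hx.2)]
  push_cast
  rfl

lemma Complex.betaIntegral_ofReal {p q : ℝ} :
    Complex.betaIntegral p q = ((∫ x in (0 : ℝ)..1, x ^ (p - 1) * (1 - x) ^ (q - 1) : ℝ) : ℂ) := by
  rw [Complex.betaIntegral, ← intervalIntegral.integral_ofReal]
  refine intervalIntegral.integral_congr fun x hx => ?_
  rw [Set.uIcc_of_le zero_le_one] at hx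
  exact (Complex.ofReal_rpow_mul_one_sub_rpow hx).symm

lemma intervalIntegrable_rpow_mul_one_sub_rpow {p q : ℝ} (hp : 0 < p) (hq : 0 < q) :
    IntervalIntegrable (fun x : ℝ => x ^ (p - 1) * (1 - x) ^ (q - 1)) volume 0 1 := by
  have h := Complex.betaIntegral_convergent (u := p) (v := q) (by simpa) (by simpa)
  rw [intervalIntegrable_iff_integrableOn_Ioc_of_le zero_le_one] at h ⊢
  refine IntegrableOn.congr_fun h.re (fun x hx => ?_) measurableSet_Ioc
  rw [← Complex.ofReal_rpow_mul_one_sub_rpow (Set.Ioc_subset_Icc_self hx), RCLike.re_to_complex,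
    Complex.ofReal_re]

lemma integral_rpow_mul_one_sub_rpow {p q : ℝ} (hp : 0 < p) (hq : 0 < q) :
    ∫ x in (0 : ℝ)..1, x ^ (p - 1) * (1 - x) ^ (q - 1) = beta p q := by
  rw [beta_eq_betaIntegralReal p q hp hq, Complex.betaIntegral_ofReal, Complex.ofReal_re]

lemma integral_pow_mul_rpow_mul_one_sub_rpow {p q : ℝ} (hp : 0 < p) (hq : 0 < q) (n : ℕ) :
    ∫ x in (0 : ℝ)..1, x ^ n * (x ^ (p - 1) * (1 - x) ^ (q - 1)) = beta (p + n) q := by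
  rw [← integral_rpow_mul_one_sub_rpow (by positivity) hq]
  refine intervalIntegral.integral_congr_ae (Filter.Eventually.of_forall fun x hx => ?_)
  rw [Set.uIoc_of_le zero_le_one] at hx
  rw [add_sub_right_comm, rpow_add_natCast hx.1.ne']
  ring

theorem hasSum_integral_mul_exp {w : ℝ → ℝ} (hw : IntervalIntegrable w volume 0 1) (ξ : ℝ) :
    HasSum (fun n : ℕ => ξ ^ n / n.factorial * ∫ x in (0 : ℝ)..1, x ^ n * w x)
      (∫ x in (0 : ℝ)..1, w x * exp (ξ * x)) := by
  simp_rw [← intervalIntegral.integral_const_mul]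
  have hw_meas := hw.def'.aestronglyMeasurable
  refine intervalIntegral.hasSum_integral_of_dominated_convergence
    (fun n x => |ξ| ^ n / n.factorial * ‖w x‖) (fun n => ?_) (fun n => ?_) ?_ ?_ ?_
  · exact ((continuous_pow n).aestronglyMeasurable.mul hw_meas).const_mul _
  · refine Filter.Eventually.of_forall fun x hx => ?_
    rw [Set.uIoc_of_le zero_le_one] at hx
    have hxn : |x| ^ n ≤ 1 := pow_le_one₀ (abs_nonneg x) (abs_le.2 ⟨by linarith [hx.1], hx.2⟩)
    rw [norm_mul, norm_mul, norm_div, norm_pow, norm_pow, Real.norm_natCast, Real.norm_eq_abs,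
      Real.norm_eq_abs]
    gcongr
    exact mul_le_of_le_one_left (norm_nonneg _) hxn
  · exact Filter.Eventually.of_forall fun x _ =>
      (Real.summable_pow_div_factorial |ξ|).mul_right _
  · simp_rw [tsum_mul_right]
    exact hw.norm.const_mul _
  · refine Filter.Eventually.of_forall fun x _ => ?_
    have := (NormedSpace.expSeries_div_hasSum_exp (ξ * x)).mul_left (w x)
    rw [← exp_eq_exp_ℝ] at this
    have hterm : (fun n : ℕ => ξ ^ n / n.factorial * (x ^ n * w x))
        = fun n => w x * ((ξ * x) ^ n / n.factorial) := by
      funext n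
      ring
    rwa [hterm]

theorem kummer_euler_integral (a c ξ : ℝ) (ha : 0 < a) (hac : a < c) :
    Summable (fun r : ℕ =>
      (ascPochhammer ℝ r).eval a / ((ascPochhammer ℝ r).eval c * (Nat.factorial r)) * ξ ^ r) ∧
    (Real.Gamma c / (Real.Gamma a * Real.Gamma (c - a))) *
        (∫ x in (0:ℝ)..1, x ^ (a - 1) * (1 - x) ^ (c - a - 1) * Real.exp (ξ * x))
      = ∑' r : ℕ,
          (ascPochhammer ℝ r).eval a / ((ascPochhammer ℝ r).eval c * (Nat.factorial r)) * ξ ^ r := by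
  have hca : 0 < c - a := sub_pos.2 hac
  have hB : beta a (c - a) ≠ 0 := (beta_pos ha hca).ne'
  have hmoment (r : ℕ) :
      ξ ^ r / r.factorial * ∫ x in (0 : ℝ)..1, x ^ r * (x ^ (a - 1) * (1 - x) ^ (c - a - 1))
        = beta a (c - a) *
          ((ascPochhammer ℝ r).eval a / ((ascPochhammer ℝ r).eval c * r.factorial) * ξ ^ r) := by
    rw [integral_pow_mul_rpow_mul_one_sub_rpow ha hca, beta_add_nat ha hca, add_sub_cancel]
    have := (ascPochhammer_pos r c (ha.trans hac)).ne'
    field_simp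
  have hseries := hasSum_integral_mul_exp (intervalIntegrable_rpow_mul_one_sub_rpow ha hca) ξ
  simp_rw [hmoment] at hseries
  rw [← mul_inv_cancel_left₀ hB (∫ x in (0 : ℝ)..1, _), hasSum_mul_left_iff hB] at hseries
  refine ⟨hseries.summable, ?_⟩
  rw [hseries.tsum_eq, beta, add_sub_cancel, inv_div]
end

section
/- The autocorrelation of sequences generated by the ergodic logistic map f₄ satisfies C₄(m) := ∫₀¹ x · f₄^m(x) · (1/π)·(x(1−x))^(−1/2) dx = 1/4 + (1/8)·δ_{m,0} for every natural number m, i.e. C₄(0) = 3/8 and C₄(m) = 1/4 for all m ≥ 1. Here f₄^m denotes the m-fold iterate of f₄. -/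
open MeasureTheory Real

/-!
The affine change of variables `x = (1 - u) / 2` conjugates `f₄` on `[0, 1]` to the Chebyshev
polynomial `T₂` on `[-1, 1]`, so `f₄^m` becomes `T_{2^m}`, and it turns `ρ₄ x dx` into the
Chebyshev weight `du / (π √(1 - u²))`. Since `x = (T₀ - T₁)(u) / 2`, the autocorrelation is
`(1 / 4π) ∫ (T₀ - T₁)(T₀ - T_{2^m})`, which orthogonality of the `Tₙ` evaluates to
`1/4 + 1/8 · [2^m = 1]`.
-/

open Set Polynomial Polynomial.Chebyshev

lemma f4_one_sub_div_two (u : ℝ) : f4 ((1 - u) / 2) = (1 - (T ℝ 2).eval u) / 2 := by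
  simp only [f4, T_two, eval_sub, eval_mul, eval_pow, eval_X, eval_ofNat, eval_one]
  ring

lemma f4_iterate_one_sub_div_two (m : ℕ) (u : ℝ) :
    f4^[m] ((1 - u) / 2) = (1 - (T ℝ (2 ^ m)).eval u) / 2 := by
  induction m generalizing u with
  | zero => simp
  | succ m ih =>
    rw [Function.iterate_succ_apply, f4_one_sub_div_two, ih, ← eval_comp, ← T_mul, pow_succ]

lemma rho4_one_sub_div_two {u : ℝ} (hu : u ∈ Icc (-1) 1) :
    rho4 ((1 - u) / 2) = 2 / π * √(1 - u ^ 2)⁻¹ := by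
  have h : 0 ≤ 1 - u ^ 2 := by nlinarith [hu.1, hu.2]
  rw [rho4, show (1 - u) / 2 * (1 - (1 - u) / 2) = (1 - u ^ 2) / 4 by ring,
    neg_div, rpow_neg (by positivity), ← sqrt_eq_rpow, sqrt_div' _ (by norm_num : (0:ℝ) ≤ 4),
    show √(4:ℝ) = 2 by rw [show (4:ℝ) = 2 ^ 2 by norm_num, sqrt_sq (by norm_num)], sqrt_inv]
  field_simp

lemma integral_mul_rho4 (g : ℝ → ℝ) :
    ∫ x in (0:ℝ)..1, g x * rho4 x = (∫ u, g ((1 - u) / 2) ∂measureT) / π := by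
  have hsub := intervalIntegral.integral_comp_sub_div (fun x => g x * rho4 x) (a := -1) (b := 1)
    two_ne_zero (1 / 2)
  norm_num at hsub
  have hcongr : EqOn (fun u => g ((1 - u) / 2) * √(1 - u ^ 2)⁻¹ / π)
      (fun u => 1 / 2 * (g (1 / 2 - u / 2) * rho4 (1 / 2 - u / 2))) (uIcc (-1) 1) := by
    intro u hu
    rw [uIcc_of_le (by norm_num)] at hu
    simp only [show 1 / 2 - u / 2 = (1 - u) / 2 by ring, rho4_one_sub_div_two hu]
    field_simp
  rw [integral_measureT, ← intervalIntegral.integral_div, intervalIntegral.integral_congr hcongr,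
    intervalIntegral.integral_const_mul, hsub]
  ring

lemma integral_one_sub_mul_one_sub_T {n : ℕ} (hn : n ≠ 0) :
    ∫ u, (1 - u) * (1 - (T ℝ n).eval u) ∂measureT = π + if n = 1 then π / 2 else 0 := by
  have hexpand : (fun u : ℝ => (1 - u) * (1 - (T ℝ n).eval u)) = fun u =>
      (T ℝ 0).eval u - (T ℝ 1).eval u - (T ℝ n).eval u + (T ℝ 1).eval u * (T ℝ n).eval u := by
    ext u
    simp only [T_zero, T_one, eval_one, eval_X]
    ring
  rw [hexpand, integral_add, integral_sub, integral_sub, integral_eval_T_real_measureT_zero,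
    integral_eval_T_real_measureT_of_ne_zero one_ne_zero,
    integral_eval_T_real_measureT_of_ne_zero (Int.natCast_ne_zero.mpr hn)]
  all_goals try exact integrable_measureT (by fun_prop)
  split_ifs with h1
  · subst h1
    rw [← Nat.cast_one, integral_T_real_mul_self_measureT_of_ne_zero one_ne_zero]
    ring
  · rw [← Nat.cast_one, integral_eval_T_real_mul_eval_T_real_measureT_of_ne (Ne.symm h1)]
    ring

lemma integral_mul_f4_iterate_mul_rho4 (m : ℕ) :
    ∫ x in (0:ℝ)..1, x * f4^[m] x * rho4 x = 1 / 4 + if m = 0 then 1 / 8 else 0 := by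
  have hchebyshev := integral_one_sub_mul_one_sub_T (pow_ne_zero m two_ne_zero)
  push_cast at hchebyshev
  rw [integral_mul_rho4 fun x => x * f4^[m] x]
  simp only [f4_iterate_one_sub_div_two, div_mul_div_comm, integral_div, hchebyshev,
    Nat.pow_eq_one, OfNat.ofNat_ne_one, false_or]
  split_ifs <;> field_simp <;> ring

theorem autocorrelation_f4 :
    (∀ m : ℕ,
      (∫ x in (0:ℝ)..1, x * (f4^[m] x) * rho4 x)
        = 1/4 + 1/8 * (if m = 0 then 1 else 0)) ∧
    (∫ x in (0:ℝ)..1, x * (f4^[0] x) * rho4 x) = 3/8 ∧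
    (∀ m : ℕ, 1 ≤ m → (∫ x in (0:ℝ)..1, x * (f4^[m] x) * rho4 x) = 1/4) := by
  refine ⟨fun m => ?_, ?_, fun m hm => ?_⟩
  · rw [integral_mul_f4_iterate_mul_rho4]
    split_ifs <;> norm_num
  · rw [integral_mul_f4_iterate_mul_rho4]
    norm_num
  · rw [integral_mul_f4_iterate_mul_rho4, if_neg (Nat.one_le_iff_ne_zero.mp hm)]
    norm_num
end

section
/- The fourth-order diagonal cross-moments of the zero-mean sequence generated by f₄ satisfy: for every natural number m ≥ 1, ∫₀¹ (x − 1/2)² · (f₄^m(x) − 1/2)² · (1/π)·(x(1−x))^(−1/2) dx = 1/64 (while for m = 0 the integral equals the fourth central moment 3/128). -/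
open MeasureTheory Real

lemma cos_int (n : ℕ) (hn : 1 ≤ n) : ∫ θ in (0:ℝ)..π, Real.cos (n * θ) = 0 := by
  have hc : (n : ℝ) ≠ 0 := by positivity
  rw [intervalIntegral.integral_comp_mul_left (fun x => Real.cos x) hc]
  simp [Real.sin_nat_mul_pi]

lemma hid (k : ℕ) (hk : 2 ≤ k) (θ : ℝ) :
    cos θ ^ 2 * cos (k * θ) ^ 2 =
      1/4 + cos ((2:ℕ) * θ)/4 + cos (((2*k:ℕ)) * θ)/4
        + cos (((2*k+2:ℕ)) * θ)/8 + cos (((2*k-2:ℕ)) * θ)/8 := by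
  have h2 : ((2*k-2 : ℕ) : ℝ) = 2 * (k:ℝ) - 2 := by
    have h : (2:ℕ) ≤ 2*k := by omega
    push_cast [Nat.cast_sub h]; ring
  rw [h2]
  push_cast
  have c1 : cos (2*θ) = 2 * cos θ ^2 - 1 := Real.cos_two_mul θ
  have c2 : cos (2*((k:ℝ)*θ)) = 2 * cos ((k:ℝ)*θ) ^2 - 1 := Real.cos_two_mul _
  have c3 : cos ((2*(k:ℝ)+2)*θ) = cos (2*((k:ℝ)*θ)) * cos (2*θ) - sin (2*((k:ℝ)*θ)) * sin (2*θ) := by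
    rw [show (2*(k:ℝ)+2)*θ = 2*((k:ℝ)*θ) + 2*θ by ring, cos_add]
  have c4 : cos ((2*(k:ℝ)-2)*θ) = cos (2*((k:ℝ)*θ)) * cos (2*θ) + sin (2*((k:ℝ)*θ)) * sin (2*θ) := by
    rw [show (2*(k:ℝ)-2)*θ = 2*((k:ℝ)*θ) - 2*θ by ring, cos_sub]
  rw [show (2*(k:ℝ))*θ = 2*((k:ℝ)*θ) by ring]
  rw [c3, c4, c2, c1]
  ring

lemma trig_prod (k : ℕ) (hk : 2 ≤ k) :
    ∫ θ in (0:ℝ)..π, cos θ ^ 2 * cos (k * θ) ^ 2 = π / 4 := by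
  rw [intervalIntegral.integral_congr (g := fun θ =>
      1/4 + cos ((2:ℕ) * θ)/4 + cos (((2*k:ℕ)) * θ)/4
        + cos (((2*k+2:ℕ)) * θ)/8 + cos (((2*k-2:ℕ)) * θ)/8)
      (fun θ _ => hid k hk θ)]
  have ic : ∀ (n : ℕ) (c : ℝ), IntervalIntegrable (fun θ : ℝ => cos (n*θ)/c) volume 0 π := by
    intro n c
    exact (Continuous.div_const (by continuity) c).intervalIntegrable 0 π
  have i0 : IntervalIntegrable (fun _ : ℝ => (1:ℝ)/4) volume 0 π := intervalIntegrable_const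
  rw [intervalIntegral.integral_add (((i0.add (ic 2 4)).add (ic (2*k) 4)).add (ic (2*k+2) 8)) (ic (2*k-2) 8),
      intervalIntegral.integral_add ((i0.add (ic 2 4)).add (ic (2*k) 4)) (ic (2*k+2) 8),
      intervalIntegral.integral_add (i0.add (ic 2 4)) (ic (2*k) 4),
      intervalIntegral.integral_add i0 (ic 2 4)]
  simp only [intervalIntegral.integral_div]
  rw [cos_int 2 (by norm_num), cos_int (2*k) (by omega), cos_int (2*k+2) (by omega),
      cos_int (2*k-2) (by omega)]
  simp

lemma cos4_int : ∫ θ in (0:ℝ)..π, cos θ ^ 4 = 3 * π / 8 := by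
  rw [intervalIntegral.integral_congr (g := fun θ =>
      3/8 + cos ((2:ℕ) * θ)/2 + cos ((4:ℕ) * θ)/8)
      (fun θ _ => by
        push_cast
        have c1 : cos (2*θ) = 2 * cos θ ^2 - 1 := Real.cos_two_mul θ
        have c2 : cos (4*θ) = 2 * cos (2*θ) ^2 - 1 := by
          rw [show (4:ℝ)*θ = 2*(2*θ) by ring]; exact Real.cos_two_mul _
        rw [c2, c1]; ring)]
  have ic : ∀ (n : ℕ) (c : ℝ), IntervalIntegrable (fun θ : ℝ => cos (n*θ)/c) volume 0 π := by
    intro n c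
    exact (Continuous.div_const (by continuity) c).intervalIntegrable 0 π
  have i0 : IntervalIntegrable (fun _ : ℝ => (3:ℝ)/8) volume 0 π := intervalIntegrable_const
  rw [intervalIntegral.integral_add (i0.add (ic 2 2)) (ic 4 8),
      intervalIntegral.integral_add i0 (ic 2 2)]
  simp only [intervalIntegral.integral_div]
  rw [cos_int 2 (by norm_num), cos_int 4 (by norm_num)]
  simp
  ring

lemma f4_iter (m : ℕ) (θ : ℝ) :
    f4^[m] ((1 - cos θ)/2) = (1 - cos (2^m * θ))/2 := by
  induction m with
  | zero => simp
  | succ n ih =>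
    rw [Function.iterate_succ_apply', ih,
      show ((2:ℝ)^(n+1))*θ = 2*((2:ℝ)^n*θ) by ring, Real.cos_two_mul]
    unfold f4
    ring

lemma image_phi : (fun θ : ℝ => (1 - cos θ)/2) '' Set.Ioo 0 π = Set.Ioo 0 1 := by
  ext x
  constructor
  · rintro ⟨θ, ⟨h0, hπ⟩, rfl⟩
    have h1 : cos θ < 1 := by
      have := Real.strictAntiOn_cos (Set.left_mem_Icc.2 Real.pi_pos.le)
        ⟨h0.le, hπ.le⟩ h0
      simpa using this
    have h2 : -1 < cos θ := by
      have := Real.strictAntiOn_cos ⟨h0.le, hπ.le⟩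
        (Set.right_mem_Icc.2 Real.pi_pos.le) hπ
      simpa using this
    constructor <;> simp only <;> linarith
  · rintro ⟨hx0, hx1⟩
    refine ⟨Real.arccos (1 - 2*x), ⟨?_, ?_⟩, ?_⟩
    · exact Real.arccos_pos.2 (by linarith)
    · rcases lt_or_eq_of_le (Real.arccos_le_pi (1 - 2*x)) with h | h
      · exact h
      · exfalso
        have := Real.cos_arccos (by linarith : (-1:ℝ) ≤ 1 - 2*x) (by linarith)
        rw [h, Real.cos_pi] at this
        linarith
    · show (1 - cos (Real.arccos (1 - 2*x)))/2 = x
      rw [Real.cos_arccos (by linarith) (by linarith)]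
      ring

lemma subst_lemma (m : ℕ) :
    (∫ x in (0:ℝ)..1, (x - 1/2) ^ 2 * (f4^[m] x - 1/2) ^ 2 * rho4 x)
      = (1/(16*π)) * ∫ θ in (0:ℝ)..π, cos θ ^ 2 * cos ((2^m : ℕ) * θ) ^ 2 := by
  have hderiv : ∀ θ ∈ Set.Ioo (0:ℝ) π,
      HasDerivWithinAt (fun θ : ℝ => (1 - cos θ)/2) (sin θ / 2) (Set.Ioo 0 π) θ := by
    intro θ _
    have : HasDerivAt (fun θ : ℝ => (1 - cos θ)/2) (sin θ / 2) θ := by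
      simpa using ((Real.hasDerivAt_cos θ).const_sub 1).div_const 2
    exact this.hasDerivWithinAt
  have hinj : Set.InjOn (fun θ : ℝ => (1 - cos θ)/2) (Set.Ioo 0 π) := by
    intro a ha b hb hab
    have : cos a = cos b := by simp only at hab; linarith
    exact Real.injOn_cos ⟨ha.1.le, ha.2.le⟩ ⟨hb.1.le, hb.2.le⟩ this
  have key := MeasureTheory.integral_image_eq_integral_abs_deriv_smul
    measurableSet_Ioo hderiv hinj
    (fun x => (x - 1/2) ^ 2 * (f4^[m] x - 1/2) ^ 2 * rho4 x)
  rw [image_phi] at key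
  rw [intervalIntegral.integral_of_le zero_le_one,
    MeasureTheory.integral_Ioc_eq_integral_Ioo, key]
  have hcong : ∀ θ ∈ Set.Ioo (0:ℝ) π,
      |sin θ / 2| • (((1 - cos θ)/2 - 1/2) ^ 2
        * (f4^[m] ((1 - cos θ)/2) - 1/2) ^ 2 * rho4 ((1 - cos θ)/2))
      = (1/(16*π)) * (cos θ ^ 2 * cos ((2^m : ℕ) * θ) ^ 2) := by
    intro θ ⟨h0, hπ⟩
    have hs : 0 < sin θ := Real.sin_pos_of_pos_of_lt_pi h0 hπ
    have habs : |sin θ / 2| = sin θ / 2 := abs_of_pos (by linarith)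
    have hrho : rho4 ((1 - cos θ)/2) = (1/π) * (sin θ / 2)⁻¹ := by
      unfold rho4
      have hx : (1 - cos θ)/2 * (1 - (1 - cos θ)/2) = (sin θ / 2) ^ 2 := by
        have := Real.sin_sq_add_cos_sq θ
        nlinarith [this]
      rw [hx, ← Real.rpow_natCast (sin θ / 2) 2,
        ← Real.rpow_mul (by linarith : (0:ℝ) ≤ sin θ / 2)]
      rw [show ((2:ℕ):ℝ) * (-(1:ℝ)/2) = -1 by norm_num, Real.rpow_neg_one]
    rw [f4_iter, hrho, habs, smul_eq_mul]
    push_cast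
    have : ((1 - cos θ)/2 - 1/2) = -cos θ / 2 := by ring
    rw [this, show ((1 - cos (2^m * θ))/2 - 1/2) = -cos (2^m*θ)/2 by ring]
    field_simp
    ring
  rw [MeasureTheory.setIntegral_congr_fun measurableSet_Ioo hcong,
    MeasureTheory.integral_const_mul,
    ← MeasureTheory.integral_Ioc_eq_integral_Ioo,
    ← intervalIntegral.integral_of_le Real.pi_pos.le]

theorem fourth_order_diagonal_cross_moments :
    (∀ m : ℕ, 1 ≤ m →
      (∫ x in (0:ℝ)..1, (x - 1/2) ^ 2 * (f4^[m] x - 1/2) ^ 2 * rho4 x) = 1/64) ∧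
    (∫ x in (0:ℝ)..1, (x - 1/2) ^ 2 * (f4^[0] x - 1/2) ^ 2 * rho4 x) = 3/128 := by
  constructor
  · intro m hm
    have hk : 2 ≤ 2^m := by
      calc 2 = 2^1 := by norm_num
      _ ≤ 2^m := Nat.pow_le_pow_right (by norm_num) hm
    rw [subst_lemma m, trig_prod (2^m) hk]
    have hπ : π ≠ 0 := Real.pi_ne_zero
    field_simp
    ring
  · rw [subst_lemma 0]
    rw [intervalIntegral.integral_congr (g := fun θ => cos θ ^ 4)
      (fun θ _ => by push_cast; ring_nf), cos4_int]
    have hπ : π ≠ 0 := Real.pi_ne_zero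
    field_simp
    ring
end
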